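/- Let g = g_{5,3,7} and let F = (α, β, γ, δ, σ) ∈ g*. Then: (1) if γ = δ = σ = 0 then Ω_F = {F}; (2) if γ = δ = 0, σ ≠ 0 then Ω_F = {(α, y, 0, 0, s) : y ∈ ℝ, σs > 0}; (3) if γ = 0, δ ≠ 0, σ = 0 then Ω_F = {(α, y, 0, t, s) : y ∈ ℝ, δt > 0, s = t·ln(t/δ)}; (4) if γ = 0, δ ≠ 0, σ ≠ 0 then Ω_F = {(α, y, 0, t, s) : y ∈ ℝ, δt > 0, s = t·ln(t/δ) + σ·t/δ}; (5) if γ ≠ 0, δ = σ = 0 then Ω_F = {(x, y, z, t, s) : y ∈ ℝ, γz > 0, x = α + γ − z, t = z·ln(z/γ), s = (z/2)·ln²(z/γ)}; (6) if γ ≠ 0, δ = 0, σ ≠ 0 then Ω_F = {(x, y, z, t, s) : y ∈ ℝ, γz > 0, x = α + γ − z, t = z·ln(z/γ), s = (z/2)·ln²(z/γ) + σ·z/γ}; (7) if γ ≠ 0, δ ≠ 0, σ = 0 then Ω_F = {(x, y, z, t, s) : y ∈ ℝ, γz > 0, x = α + γ − z, t = z·ln(z/γ) + δ·z/γ, s =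 (z/2)·ln²(z/γ) + (δ/γ)·z·ln(z/γ)}; (8) if γ ≠ 0, δ ≠ 0, σ ≠ 0 then Ω_F = {(x, y, z, t, s) : y ∈ ℝ, γz > 0, x = α + γ − z, t = z·ln(z/γ) + δ·z/γ, s = (z/2)·ln²(z/γ) + (δ/γ)·z·ln(z/γ) + σ·z/γ}. -/

import Mathlib

/-- The Lie bracket of g_{5,3,7}: [X1,X2] = X3, [X2,X3] = X3, [X2,X4] = X3 + X4, [X2,X5] = X4 + X5,
written in coordinates with respect to the basis (X₁, X₂, X₃, X₄, X₅) (all other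
brackets of basis vectors vanish); it is the bilinear extension of the structure
constants above. -/
def bracketg537 (U V : Fin 5 → ℝ) : Fin 5 → ℝ :=
  ![0, 0,
    (U 0 * V 1 - U 1 * V 0) + (U 1 * V 2 - U 2 * V 1) + (U 1 * V 3 - U 3 * V 1),
    (U 1 * V 3 - U 3 * V 1) + (U 1 * V 4 - U 4 * V 1),
    U 1 * V 4 - U 4 * V 1]

/-- The matrix of the adjoint endomorphism ad_U = [U, ·] in the basis (X₁, ..., X₅):
column j holds the coordinates of [U, Xⱼ]. -/
def adg537 (U : Fin 5 → ℝ) : Matrix (Fin 5) (Fin 5) ℝ :=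
  Matrix.of fun i j => bracketg537 U (Pi.single j 1) i

/-- The orbit Ω_F = { F ∘ exp(ad_U) : U ∈ g } in coordinates with respect to the dual
basis: a functional F' is identified with the vector (F'(X₁), ..., F'(X₅)), so that
F ∘ exp(ad_U) corresponds to the row-vector–matrix product vecMul F (exp (ad_U)). -/
noncomputable def orbitg537 (F : Fin 5 → ℝ) : Set (Fin 5 → ℝ) :=
  Set.range fun U : Fin 5 → ℝ => Matrix.vecMul F (NormedSpace.exp (adg537 U))

/-!
Write `b` for the `X₂`-coordinate of `U`. For `b ≠ 0`, `ad_U` is conjugate by `1 - W` (with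
`W² = 0`) to `b (D + N)`, where `D = diag(0, 0, 1, 1, 1)` and `N` is the nilpotent shift
`X₃ ↦ X₄ ↦ X₅`; for `b = 0`, `ad_U` squares to zero. Either way `F ∘ exp(ad_U)` equals
`(α + γ - eᵇγ, y, eᵇγ, eᵇ(δ + bγ), eᵇ(σ + bδ + b²γ/2))`, where `y` is `β` plus a linear function
of the remaining coordinates of `U` which is onto as soon as `(γ, δ, σ) ≠ 0`. The eight cases are
this two-parameter family rewritten in terms of `z = eᵇγ` (resp. `t = eᵇδ`, `s = eᵇσ`).
-/

open Matrix NormedSpace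
open scoped Nat

section NilpotentExp

variable {𝔸 : Type*} [Ring 𝔸] [TopologicalSpace 𝔸] [IsTopologicalRing 𝔸]

theorem NormedSpace.exp_eq_sum_range_of_pow_eq_zero (𝕂 : Type*) [Field 𝕂] [CharZero 𝕂]
    [Algebra 𝕂 𝔸] {a : 𝔸} {n : ℕ} (h : a ^ n = 0) :
    exp a = ∑ k ∈ Finset.range n, (k !⁻¹ : 𝕂) • a ^ k := by
  rw [exp_eq_tsum 𝕂]
  refine tsum_eq_sum fun k hk => ?_
  rw [pow_eq_zero_of_le (by simpa using hk) h, smul_zero]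

theorem NormedSpace.exp_eq_one_add_of_sq_eq_zero [Algebra ℚ 𝔸] {a : 𝔸} (h : a ^ 2 = 0) :
    exp a = 1 + a := by
  simp [exp_eq_sum_range_of_pow_eq_zero ℚ h, Finset.sum_range_succ]

end NilpotentExp

lemma mul_exp_mul_self_pos {c : ℝ} (hc : c ≠ 0) (b : ℝ) : 0 < c * (Real.exp b * c) := by
  rw [mul_left_comm]
  exact mul_pos (Real.exp_pos b) (mul_self_pos.2 hc)

lemma log_exp_mul_div {c : ℝ} (hc : c ≠ 0) (b : ℝ) : Real.log (Real.exp b * c / c) = b := by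
  rw [mul_div_cancel_right₀ _ hc, Real.log_exp]

lemma exp_log_div_of_mul_pos {c z : ℝ} (h : 0 < c * z) :
    Real.exp (Real.log (z / c)) = z / c := by
  refine Real.exp_log (div_pos_iff.2 ?_)
  rcases mul_pos_iff.1 h with h | h
  exacts [Or.inl h.symm, Or.inr h.symm]

namespace G537

def adDiag (b : ℝ) : Matrix (Fin 5) (Fin 5) ℝ := diagonal ![0, 0, b, b, b]

def adNil (b : ℝ) : Matrix (Fin 5) (Fin 5) ℝ :=
  !![0, 0, 0, 0, 0; 0, 0, 0, 0, 0; 0, 0, 0, b, 0; 0, 0, 0, 0, b; 0, 0, 0, 0, 0]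

noncomputable def adConj (U : Fin 5 → ℝ) : Matrix (Fin 5) (Fin 5) ℝ :=
  !![0, 0, 0, 0, 0; 0, 0, 0, 0, 0; -1, (U 0 - U 2) / U 1, 0, 0, 0;
    0, -U 3 / U 1, 0, 0, 0; 0, -U 4 / U 1, 0, 0, 0]

lemma adDiag_commute_adNil (b : ℝ) : Commute (adDiag b) (adNil b) := by
  ext i j
  fin_cases i <;> fin_cases j <;> simp [adDiag, adNil, mul_apply, Fin.sum_univ_five]

lemma adNil_pow_three (b : ℝ) : adNil b ^ 3 = 0 := by
  ext i j
  fin_cases i <;> fin_cases j <;> simp [adNil, pow_succ, mul_apply, Fin.sum_univ_five]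

lemma exp_adDiag_add_adNil (b : ℝ) :
    exp (adDiag b + adNil b) =
      !![1, 0, 0, 0, 0; 0, 1, 0, 0, 0;
        0, 0, Real.exp b, b * Real.exp b, b ^ 2 / 2 * Real.exp b;
        0, 0, 0, Real.exp b, b * Real.exp b; 0, 0, 0, 0, Real.exp b] := by
  rw [Matrix.exp_add_of_commute _ _ (adDiag_commute_adNil b), adDiag, exp_diagonal,
    exp_eq_sum_range_of_pow_eq_zero ℝ (adNil_pow_three b)]
  ext i j
  fin_cases i <;> fin_cases j <;>
    simp [adNil, Finset.sum_range_succ, pow_succ, mul_apply, Fin.sum_univ_five, one_apply,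
      ← Real.exp_eq_exp_ℝ] <;> ring

lemma adConj_mul_self (U : Fin 5 → ℝ) : adConj U * adConj U = 0 := by
  ext i j
  fin_cases i <;> fin_cases j <;> simp [adConj, mul_apply, Fin.sum_univ_five]

lemma adg537_eq_conj (U : Fin 5 → ℝ) (hU : U 1 ≠ 0) :
    adg537 U = (1 - adConj U) * (adDiag (U 1) + adNil (U 1)) * (1 + adConj U) := by
  ext i j
  fin_cases i <;> fin_cases j <;>
    simp [adg537, bracketg537, adConj, adDiag, adNil, mul_apply, Fin.sum_univ_five, one_apply,
      Pi.single_apply] <;> field_simp <;> ring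

lemma exp_adg537_of_ne_zero (U : Fin 5 → ℝ) (hU : U 1 ≠ 0) :
    exp (adg537 U) = (1 - adConj U) * exp (adDiag (U 1) + adNil (U 1)) * (1 + adConj U) := by
  have hsq := adConj_mul_self U
  let P : (Matrix (Fin 5) (Fin 5) ℝ)ˣ :=
    ⟨1 - adConj U, 1 + adConj U, by noncomm_ring [hsq], by noncomm_ring [hsq]⟩
  rw [adg537_eq_conj U hU]
  exact Matrix.exp_units_conj P _

lemma adg537_sq_of_eq_zero (U : Fin 5 → ℝ) (hU : U 1 = 0) : adg537 U ^ 2 = 0 := by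
  ext i j
  fin_cases i <;> fin_cases j <;>
    simp [adg537, bracketg537, hU, sq, mul_apply, Fin.sum_univ_five, Pi.single_apply]

noncomputable def expSubOneDiv (b : ℝ) : ℝ := if b = 0 then 1 else (Real.exp b - 1) / b

lemma expSubOneDiv_ne_zero (b : ℝ) : expSubOneDiv b ≠ 0 := by
  unfold expSubOneDiv
  split_ifs with hb
  · exact one_ne_zero
  · exact div_ne_zero (sub_ne_zero.2 (mt (Real.exp_eq_one_iff b).1 hb)) hb

noncomputable def orbitPoint (α γ δ σ b y : ℝ) : Fin 5 → ℝ :=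
  ![α + γ - Real.exp b * γ, y, Real.exp b * γ, Real.exp b * (δ + b * γ),
    Real.exp b * (σ + b * δ + b ^ 2 / 2 * γ)]

noncomputable def orbitY (β γ δ σ : ℝ) (U : Fin 5 → ℝ) : ℝ :=
  β + γ * (expSubOneDiv (U 1) * (U 0 - U 2) - Real.exp (U 1) * (U 3 + U 1 / 2 * U 4))
    - δ * (expSubOneDiv (U 1) * U 3 + Real.exp (U 1) * U 4) - σ * expSubOneDiv (U 1) * U 4

lemma vecMul_exp_adg537 (α β γ δ σ : ℝ) (U : Fin 5 → ℝ) :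
    vecMul ![α, β, γ, δ, σ] (exp (adg537 U)) =
      orbitPoint α γ δ σ (U 1) (orbitY β γ δ σ U) := by
  by_cases hU : U 1 = 0
  · rw [exp_eq_one_add_of_sq_eq_zero (adg537_sq_of_eq_zero U hU)]
    ext j
    fin_cases j <;>
      simp [orbitPoint, orbitY, expSubOneDiv, hU, adg537, bracketg537, vecMul, dotProduct,
        Fin.sum_univ_five, one_apply, Pi.single_apply] <;> ring
  · rw [exp_adg537_of_ne_zero U hU, exp_adDiag_add_adNil]
    ext j
    fin_cases j <;>
      simp [orbitPoint, orbitY, expSubOneDiv, hU, adConj, vecMul, dotProduct, mul_apply,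
        Fin.sum_univ_five, one_apply] <;> field_simp <;> ring

lemma orbitg537_trivial (α β : ℝ) :
    orbitg537 ![α, β, 0, 0, 0] = {![α, β, 0, 0, 0]} := by
  refine Set.eq_singleton_iff_unique_mem.2 ⟨⟨0, ?_⟩, ?_⟩
  · simp [vecMul_exp_adg537, orbitPoint, orbitY]
  · rintro _ ⟨U, rfl⟩
    simp [vecMul_exp_adg537, orbitPoint, orbitY]

lemma orbitPoint_mem_orbitg537 {α β γ δ σ : ℝ} (h : γ ≠ 0 ∨ δ ≠ 0 ∨ σ ≠ 0) (b y : ℝ) :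
    orbitPoint α γ δ σ b y ∈ orbitg537 ![α, β, γ, δ, σ] := by
  suffices ∃ U : Fin 5 → ℝ, U 1 = b ∧ orbitY β γ δ σ U = y by
    obtain ⟨U, rfl, hy⟩ := this
    exact ⟨U, hy ▸ vecMul_exp_adg537 α β γ δ σ U⟩
  have hk := expSubOneDiv_ne_zero b
  rcases eq_or_ne γ 0 with rfl | hγ
  · rcases eq_or_ne δ 0 with rfl | hδ
    · have hσ : σ ≠ 0 := by simpa using h
      exact ⟨![0, b, 0, 0, (β - y) / (σ * expSubOneDiv b)], rfl, by
        simp only [orbitY, cons_val_zero, cons_val_one, cons_val]; field_simp; ring⟩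
    · exact ⟨![0, b, 0, (β - y) / (δ * expSubOneDiv b), 0], rfl, by
        simp only [orbitY, cons_val_zero, cons_val_one, cons_val]; field_simp; ring⟩
  · exact ⟨![(y - β) / (γ * expSubOneDiv b), b, 0, 0, 0], rfl, by
      simp only [orbitY, cons_val_zero, cons_val_one, cons_val]; field_simp; ring⟩

lemma orbitg537_eq_range {α β γ δ σ : ℝ} (h : γ ≠ 0 ∨ δ ≠ 0 ∨ σ ≠ 0) :
    orbitg537 ![α, β, γ, δ, σ] = {p | ∃ b y, p = orbitPoint α γ δ σ b y} := by
  refine Set.Subset.antisymm ?_ ?_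
  · rintro _ ⟨U, rfl⟩
    exact ⟨_, _, vecMul_exp_adg537 α β γ δ σ U⟩
  · rintro _ ⟨b, y, rfl⟩
    exact orbitPoint_mem_orbitg537 h b y

lemma orbitg537_of_gamma_ne_zero (α β γ δ σ : ℝ) (hγ : γ ≠ 0) :
    orbitg537 ![α, β, γ, δ, σ] = {p | ∃ x y z t s : ℝ, γ * z > 0 ∧ x = α + γ - z ∧
      t = z * Real.log (z / γ) + δ * z / γ ∧
      s = z / 2 * Real.log (z / γ) ^ 2 + δ / γ * z * Real.log (z / γ) + σ * z / γ ∧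
      p = ![x, y, z, t, s]} := by
  rw [orbitg537_eq_range (Or.inl hγ)]
  ext p
  constructor
  · rintro ⟨b, y, rfl⟩
    refine ⟨_, y, Real.exp b * γ, Real.exp b * (δ + b * γ),
      Real.exp b * (σ + b * δ + b ^ 2 / 2 * γ), mul_exp_mul_self_pos hγ b, rfl, ?_, ?_, rfl⟩ <;>
    · rw [log_exp_mul_div hγ]
      field_simp
      ring
  · rintro ⟨x, y, z, t, s, hz, rfl, rfl, rfl, rfl⟩
    refine ⟨Real.log (z / γ), y, ?_⟩
    ext j
    fin_cases j <;> simp [orbitPoint, exp_log_div_of_mul_pos hz] <;> field_simp <;> ring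

lemma orbitg537_of_delta_ne_zero (α β δ σ : ℝ) (hδ : δ ≠ 0) :
    orbitg537 ![α, β, 0, δ, σ] = {p | ∃ y t s : ℝ, δ * t > 0 ∧
      s = t * Real.log (t / δ) + σ * t / δ ∧ p = ![α, y, 0, t, s]} := by
  rw [orbitg537_eq_range (Or.inr (Or.inl hδ))]
  ext p
  constructor
  · rintro ⟨b, y, rfl⟩
    refine ⟨y, Real.exp b * δ, Real.exp b * (σ + b * δ), mul_exp_mul_self_pos hδ b, ?_, ?_⟩
    · rw [log_exp_mul_div hδ]
      field_simp
      ring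
    · ext j
      fin_cases j <;> simp [orbitPoint]
  · rintro ⟨y, t, s, ht, rfl, rfl⟩
    refine ⟨Real.log (t / δ), y, ?_⟩
    ext j
    fin_cases j <;> simp [orbitPoint, exp_log_div_of_mul_pos ht] <;> field_simp <;> ring

lemma orbitg537_of_sigma_ne_zero (α β σ : ℝ) (hσ : σ ≠ 0) :
    orbitg537 ![α, β, 0, 0, σ] = {p | ∃ y s : ℝ, σ * s > 0 ∧ p = ![α, y, 0, 0, s]} := by
  rw [orbitg537_eq_range (Or.inr (Or.inr hσ))]
  ext p
  constructor
  · rintro ⟨b, y, rfl⟩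
    refine ⟨y, Real.exp b * σ, mul_exp_mul_self_pos hσ b, ?_⟩
    ext j
    fin_cases j <;> simp [orbitPoint]
  · rintro ⟨y, s, hs, rfl⟩
    refine ⟨Real.log (s / σ), y, ?_⟩
    ext j
    fin_cases j <;> simp [orbitPoint, exp_log_div_of_mul_pos hs] <;> field_simp

end G537

theorem kOrbits_g537 (α β γ δ σ : ℝ) :
    (γ = 0 → δ = 0 → σ = 0 → orbitg537 ![α, β, γ, δ, σ] = {![α, β, γ, δ, σ]}) ∧
    (γ = 0 → δ = 0 → σ ≠ 0 → orbitg537 ![α, β, γ, δ, σ] = {p | ∃ y s : ℝ, σ * s > 0 ∧ p = ![α, y, 0, 0, s]}) ∧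
    (γ = 0 → δ ≠ 0 → σ = 0 → orbitg537 ![α, β, γ, δ, σ] = {p | ∃ y t s : ℝ, δ * t > 0 ∧ s = t * Real.log (t / δ) ∧ p = ![α, y, 0, t, s]}) ∧
    (γ = 0 → δ ≠ 0 → σ ≠ 0 → orbitg537 ![α, β, γ, δ, σ] = {p | ∃ y t s : ℝ, δ * t > 0 ∧ s = t * Real.log (t / δ) + σ * t / δ ∧ p = ![α, y, 0, t, s]}) ∧
    (γ ≠ 0 → δ = 0 → σ = 0 → orbitg537 ![α, β, γ, δ, σ] = {p | ∃ x y z t s : ℝ, γ * z > 0 ∧ x = α + γ - z ∧ t = z * Real.log (z / γ) ∧ s = z / 2 * (Real.log (z / γ)) ^ 2 ∧ p = ![x, y, z, t, s]}) ∧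
    (γ ≠ 0 → δ = 0 → σ ≠ 0 → orbitg537 ![α, β, γ, δ, σ] = {p | ∃ x y z t s : ℝ, γ * z > 0 ∧ x = α + γ - z ∧ t = z * Real.log (z / γ) ∧ s = z / 2 * (Real.log (z / γ)) ^ 2 + σ * z / γ ∧ p = ![x, y, z, t, s]}) ∧
    (γ ≠ 0 → δ ≠ 0 → σ = 0 → orbitg537 ![α, β, γ, δ, σ] = {p | ∃ x y z t s : ℝ, γ * z > 0 ∧ x = α + γ - z ∧ t = z * Real.log (z / γ) + δ * z / γ ∧ s = z / 2 * (Real.log (z / γ)) ^ 2 + δ / γ * z * Real.log (z / γ) ∧ p = ![x, y, z, t, s]}) ∧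
    (γ ≠ 0 → δ ≠ 0 → σ ≠ 0 → orbitg537 ![α, β, γ, δ, σ] = {p | ∃ x y z t s : ℝ, γ * z > 0 ∧ x = α + γ - z ∧ t = z * Real.log (z / γ) + δ * z / γ ∧ s = z / 2 * (Real.log (z / γ)) ^ 2 + δ / γ * z * Real.log (z / γ) + σ * z / γ ∧ p = ![x, y, z, t, s]}) := by
  refine ⟨?_, ?_, ?_, ?_, ?_, ?_, ?_, ?_⟩
  · rintro rfl rfl rfl
    exact G537.orbitg537_trivial α β
  · rintro rfl rfl hσ
    exact G537.orbitg537_of_sigma_ne_zero α β σ hσ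
  · rintro rfl hδ rfl
    simpa only [zero_mul, zero_div, add_zero] using G537.orbitg537_of_delta_ne_zero α β δ 0 hδ
  · rintro rfl hδ -
    exact G537.orbitg537_of_delta_ne_zero α β δ σ hδ
  · rintro hγ rfl rfl
    simpa only [zero_mul, zero_div, add_zero] using G537.orbitg537_of_gamma_ne_zero α β γ 0 0 hγ
  · rintro hγ rfl -
    simpa only [zero_mul, zero_div, add_zero] using G537.orbitg537_of_gamma_ne_zero α β γ 0 σ hγ
  · rintro hγ - rfl
    simpa only [zero_mul, zero_div, add_zero] using G537.orbitg537_of_gamma_ne_zero α β γ δ 0 hγ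
  · rintro hγ - -
    exact G537.orbitg537_of_gamma_ne_zero α β γ δ σ hγ
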